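/- arXiv:math/0511602 — 2 statements merged into one kernel-verified Lean document; each statement's English description precedes it below -/
import Mathlib

section
/- For every even non-negative integer n, the coefficient of x^n in the power series expansion of 1/((1-x^2)(1-x^4)(1-x^6)) equals floor((n^2 + 12n)/48) + 1. -/
open PowerSeries

noncomputable def Faux : PowerSeries ℚ :=
  PowerSeries.mk fun n => if Even n then ((((n : ℤ) ^ 2 + 12 * n) / 48 + 1 : ℤ) : ℚ) else 0

lemma coeff_Faux (n : ℕ) :
    PowerSeries.coeff n Faux =
      if Even n then ((((n : ℤ) ^ 2 + 12 * n) / 48 + 1 : ℤ) : ℚ) else 0 := by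
  simp [Faux]

lemma key48 (t : ℤ) :
    ((2*t)^2 + 12*(2*t))/48 - ((2*t-2)^2 + 12*(2*t-2))/48 - ((2*t-4)^2 + 12*(2*t-4))/48
      + ((2*t-8)^2 + 12*(2*t-8))/48 + ((2*t-10)^2 + 12*(2*t-10))/48
      - ((2*t-12)^2 + 12*(2*t-12))/48 = 0 := by
  obtain ⟨q, r, hr0, hr12, rfl⟩ : ∃ q r : ℤ, 0 ≤ r ∧ r < 12 ∧ t = 12 * q + r :=
    ⟨t / 12, t % 12, Int.emod_nonneg t (by norm_num), Int.emod_lt_of_pos t (by norm_num),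
      (Int.mul_ediv_add_emod t 12).symm⟩
  have e : ∀ k : ℤ, ((2*(12*q+r) - 2*k)^2 + 12*(2*(12*q+r) - 2*k))/48
      = (12*q*q + 2*q*(r-k) + 6*q) + (4*((r-k)*(r-k) + 6*(r-k)))/48 := by
    intro k
    rw [show (2*(12*q+r) - 2*k)^2 + 12*(2*(12*q+r) - 2*k)
        = (4*((r-k)*(r-k) + 6*(r-k))) + (12*q*q + 2*q*(r-k) + 6*q) * 48 by ring,
      Int.add_mul_ediv_right _ _ (by norm_num : (48:ℤ) ≠ 0)]
    ring
  have e0 : ((2*(12*q+r))^2 + 12*(2*(12*q+r)))/48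
      = (12*q*q + 2*q*(r-0) + 6*q) + (4*((r-0)*(r-0) + 6*(r-0)))/48 := by
    rw [show (2*(12*q+r)) = (2*(12*q+r) - 2*0) by ring]; exact e 0
  rw [e0]
  rw [show (2*(12*q+r) - 2 : ℤ) = 2*(12*q+r) - 2*1 by ring, e 1,
    show (2*(12*q+r) - 4 : ℤ) = 2*(12*q+r) - 2*2 by ring, e 2,
    show (2*(12*q+r) - 8 : ℤ) = 2*(12*q+r) - 2*4 by ring, e 4,
    show (2*(12*q+r) - 10 : ℤ) = 2*(12*q+r) - 2*5 by ring, e 5,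
    show (2*(12*q+r) - 12 : ℤ) = 2*(12*q+r) - 2*6 by ring, e 6]
  have h12 : r ≤ 11 := by omega
  interval_cases r <;> push_cast <;> ring_nf <;> norm_num

lemma mul_Faux :
    (((1 - PowerSeries.X ^ 2) * (1 - PowerSeries.X ^ 4) *
      (1 - PowerSeries.X ^ 6) : PowerSeries ℚ)) * Faux = 1 := by
  have hg : ((1 - PowerSeries.X ^ 2) * (1 - PowerSeries.X ^ 4) *
      (1 - PowerSeries.X ^ 6) : PowerSeries ℚ) =
      1 - X ^ 2 - X ^ 4 + X ^ 8 + X ^ 10 - X ^ 12 := by ring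
  rw [hg]
  ext n
  rw [sub_mul, add_mul, add_mul, sub_mul, sub_mul, one_mul]
  simp only [map_sub, map_add, coeff_X_pow_mul']
  rw [coeff_one]
  rcases Nat.lt_or_ge n 12 with h | h
  · interval_cases n <;> norm_num [coeff_Faux, Nat.even_iff]
  · have h2 : 2 ≤ n := by omega
    have h4 : 4 ≤ n := by omega
    have h8 : 8 ≤ n := by omega
    have h10 : 10 ≤ n := by omega
    rw [if_pos h2, if_pos h4, if_pos h8, if_pos h10, if_pos h, if_neg (by omega : ¬ n = 0)]
    simp only [coeff_Faux]
    by_cases he : Even n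
    · have esub : ∀ k : ℕ, Even k → k ≤ n → Even (n - k) := by
        intro k hk hkn
        exact (Nat.even_sub hkn).2 (iff_of_true he hk)
      rw [if_pos he, if_pos (esub 2 ⟨1, rfl⟩ h2), if_pos (esub 4 ⟨2, rfl⟩ h4),
        if_pos (esub 8 ⟨4, rfl⟩ h8), if_pos (esub 10 ⟨5, rfl⟩ h10),
        if_pos (esub 12 ⟨6, rfl⟩ h)]
      obtain ⟨m, rfl⟩ := he
      have hc : ∀ k : ℕ, k ≤ m + m → ((m + m - k : ℕ) : ℤ) = (m : ℤ) + m - k := by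
        intro k hk; omega
      rw [hc 2 h2, hc 4 h4, hc 8 h8, hc 10 h10, hc 12 h]
      push_cast
      rw [show ((m:ℤ) + m)^2 + 12*((m:ℤ)+m) = (2*(m:ℤ))^2 + 12*(2*(m:ℤ)) by ring,
        show ((m:ℤ) + m - 2)^2 + 12*((m:ℤ)+m-2) = (2*(m:ℤ)-2)^2 + 12*(2*(m:ℤ)-2) by ring,
        show ((m:ℤ) + m - 4)^2 + 12*((m:ℤ)+m-4) = (2*(m:ℤ)-4)^2 + 12*(2*(m:ℤ)-4) by ring,
        show ((m:ℤ) + m - 8)^2 + 12*((m:ℤ)+m-8) = (2*(m:ℤ)-8)^2 + 12*(2*(m:ℤ)-8) by ring,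
        show ((m:ℤ) + m - 10)^2 + 12*((m:ℤ)+m-10) = (2*(m:ℤ)-10)^2 + 12*(2*(m:ℤ)-10) by ring,
        show ((m:ℤ) + m - 12)^2 + 12*((m:ℤ)+m-12) = (2*(m:ℤ)-12)^2 + 12*(2*(m:ℤ)-12) by ring]
      have L : ((2*(m:ℤ))^2 + 12*(2*(m:ℤ)))/48 + 1
            - (((2*(m:ℤ)-2)^2 + 12*(2*(m:ℤ)-2))/48 + 1)
            - (((2*(m:ℤ)-4)^2 + 12*(2*(m:ℤ)-4))/48 + 1)
            + (((2*(m:ℤ)-8)^2 + 12*(2*(m:ℤ)-8))/48 + 1)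
            + (((2*(m:ℤ)-10)^2 + 12*(2*(m:ℤ)-10))/48 + 1)
            - (((2*(m:ℤ)-12)^2 + 12*(2*(m:ℤ)-12))/48 + 1) = 0 := by
        have := key48 (m : ℤ)
        omega
      exact_mod_cast L
    · have osub : ∀ k : ℕ, Even k → k ≤ n → ¬ Even (n - k) := by
        intro k hk hkn c
        exact he (((Nat.even_sub hkn).1 c).2 hk)
      rw [if_neg he, if_neg (osub 2 ⟨1, rfl⟩ h2), if_neg (osub 4 ⟨2, rfl⟩ h4),
        if_neg (osub 8 ⟨4, rfl⟩ h8), if_neg (osub 10 ⟨5, rfl⟩ h10),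
        if_neg (osub 12 ⟨6, rfl⟩ h)]
      ring

/-- For every even non-negative integer n, the coefficient of x^n in
1/((1-x^2)(1-x^4)(1-x^6)) equals ⌊(n^2+12n)/48⌋ + 1. -/
theorem stmt_1 (n : ℕ) (hn : Even n) :
    PowerSeries.coeff n
        (((1 - PowerSeries.X ^ 2) * (1 - PowerSeries.X ^ 4) *
          (1 - PowerSeries.X ^ 6) : PowerSeries ℚ)⁻¹) =
      ((⌊(((n : ℚ)) ^ 2 + 12 * (n : ℚ)) / 48⌋ + 1 : ℤ) : ℚ) := by
  have hc : constantCoeff (((1 - PowerSeries.X ^ 2) * (1 - PowerSeries.X ^ 4) *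
      (1 - PowerSeries.X ^ 6) : PowerSeries ℚ)) ≠ 0 := by
    simp
  have hF : Faux = (((1 - PowerSeries.X ^ 2) * (1 - PowerSeries.X ^ 4) *
      (1 - PowerSeries.X ^ 6) : PowerSeries ℚ))⁻¹ := by
    rw [PowerSeries.eq_inv_iff_mul_eq_one hc, mul_comm]
    exact mul_Faux
  rw [← hF, coeff_Faux, if_pos hn]
  have hsp : (((n : ℚ)) ^ 2 + 12 * (n : ℚ)) / 48
      = ((((n:ℤ)^2 + 12*n : ℤ)) : ℚ) / ((48:ℕ) : ℚ) := by push_cast; norm_num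
  rw [hsp, Rat.floor_intCast_div_natCast]
  norm_num
end

section
/- Let P2(a,b,c) = (a-b)^2+(b-c)^2+(c-a)^2, P3(a,b,c) = (a-b)(b-c)(c-a), P4(a,b,c,d) = (a-c)(b-c)(a-d)(b-d), all in Q[y1,y2,y3,y4]. For non-negative integers n, m, k define Q^{n,m,k} = (P2(y1,y2,y3)^n P3(y1,y2,y3)^{2m+3} + P2(y4,y3,y2)^n P3(y4,y3,y2)^{2m+3} + P2(y3,y4,y1)^n P3(y3,y4,y1)^{2m+3} + P2(y2,y1,y4)^n P3(y2,y1,y4)^{2m+3}) · (P4(y1,y2,y3,y4)^k + P4(y1,y3,y2,y4)^k + P4(y1,y4,y2,y3)^k). Then Q^{n,m,k} is a skew symmetric polynomial: for every τ in S4, applying τ to the variables multiplies Q^{n,m,k} by sgn(τ). -/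
open MvPolynomial

/-- P2(a,b,c) = (a-b)^2 + (b-c)^2 + (c-a)^2. -/
noncomputable def P2 (a b c : MvPolynomial (Fin 4) ℚ) : MvPolynomial (Fin 4) ℚ :=
  (a - b) ^ 2 + (b - c) ^ 2 + (c - a) ^ 2

/-- P3(a,b,c) = (a-b)(b-c)(c-a). -/
noncomputable def P3 (a b c : MvPolynomial (Fin 4) ℚ) : MvPolynomial (Fin 4) ℚ :=
  (a - b) * (b - c) * (c - a)

/-- P4(a,b,c,d) = (a-c)(b-c)(a-d)(b-d). -/
noncomputable def P4 (a b c d : MvPolynomial (Fin 4) ℚ) : MvPolynomial (Fin 4) ℚ :=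
  (a - c) * (b - c) * (a - d) * (b - d)

/-- The polynomial Q^{n,m,k} of the paper. -/
noncomputable def Qp (n m k : ℕ) : MvPolynomial (Fin 4) ℚ :=
  (P2 (X 0) (X 1) (X 2) ^ n * P3 (X 0) (X 1) (X 2) ^ (2 * m + 3) +
      P2 (X 3) (X 2) (X 1) ^ n * P3 (X 3) (X 2) (X 1) ^ (2 * m + 3) +
      P2 (X 2) (X 3) (X 0) ^ n * P3 (X 2) (X 3) (X 0) ^ (2 * m + 3) +
      P2 (X 1) (X 0) (X 3) ^ n * P3 (X 1) (X 0) (X 3) ^ (2 * m + 3)) *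
    (P4 (X 0) (X 1) (X 2) (X 3) ^ k + P4 (X 0) (X 2) (X 1) (X 3) ^ k +
      P4 (X 0) (X 3) (X 1) (X 2) ^ k)

lemma rename_P2 (f : Fin 4 → Fin 4) (a b c : MvPolynomial (Fin 4) ℚ) :
    rename f (P2 a b c) = P2 (rename f a) (rename f b) (rename f c) := by
  simp [P2]

lemma rename_P3 (f : Fin 4 → Fin 4) (a b c : MvPolynomial (Fin 4) ℚ) :
    rename f (P3 a b c) = P3 (rename f a) (rename f b) (rename f c) := by
  simp [P3]

lemma rename_P4 (f : Fin 4 → Fin 4) (a b c d : MvPolynomial (Fin 4) ℚ) :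
    rename f (P4 a b c d) = P4 (rename f a) (rename f b) (rename f c) (rename f d) := by
  simp [P4]

lemma key (n m : ℕ) (a b c a' b' c' : MvPolynomial (Fin 4) ℚ)
    (h2 : P2 a b c = P2 a' b' c') (h3 : P3 a b c = -P3 a' b' c') :
    P2 a b c ^ n * P3 a b c ^ (2 * m + 3) =
      -(P2 a' b' c' ^ n * P3 a' b' c' ^ (2 * m + 3)) := by
  rw [h2, h3, Odd.neg_pow ⟨m + 1, by ring⟩]; ring

lemma swap01 (n m k : ℕ) :
    rename (⇑(Equiv.swap (0 : Fin 4) 1)) (Qp n m k) = -Qp n m k := by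
  have e0 : Equiv.swap (0 : Fin 4) 1 0 = 1 := by decide
  have e1 : Equiv.swap (0 : Fin 4) 1 1 = 0 := by decide
  have e2 : Equiv.swap (0 : Fin 4) 1 2 = 2 := by decide
  have e3 : Equiv.swap (0 : Fin 4) 1 3 = 3 := by decide
  simp only [Qp, map_add, map_mul, map_pow, rename_P2, rename_P3, rename_P4, rename_X,
    e0, e1, e2, e3]
  rw [key n m (X 1) (X 0) (X 2) (X 0) (X 1) (X 2) (by simp only [P2]; ring)
        (by simp only [P3]; ring),
    key n m (X 3) (X 2) (X 0) (X 2) (X 3) (X 0) (by simp only [P2]; ring)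
        (by simp only [P3]; ring),
    key n m (X 2) (X 3) (X 1) (X 3) (X 2) (X 1) (by simp only [P2]; ring)
        (by simp only [P3]; ring),
    key n m (X 0) (X 1) (X 3) (X 1) (X 0) (X 3) (by simp only [P2]; ring)
        (by simp only [P3]; ring),
    show P4 (X 1) (X 0) (X 2) (X 3) = P4 (X 0) (X 1) (X 2) (X 3) from by simp only [P4]; ring,
    show P4 (X 1) (X 2) (X 0) (X 3) = P4 (X 0) (X 3) (X 1) (X 2) from by simp only [P4]; ring,
    show P4 (X 1) (X 3) (X 0) (X 2) = P4 (X 0) (X 2) (X 1) (X 3) from by simp only [P4]; ring]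
  ring

lemma swap12 (n m k : ℕ) :
    rename (⇑(Equiv.swap (1 : Fin 4) 2)) (Qp n m k) = -Qp n m k := by
  have e0 : Equiv.swap (1 : Fin 4) 2 0 = 0 := by decide
  have e1 : Equiv.swap (1 : Fin 4) 2 1 = 2 := by decide
  have e2 : Equiv.swap (1 : Fin 4) 2 2 = 1 := by decide
  have e3 : Equiv.swap (1 : Fin 4) 2 3 = 3 := by decide
  simp only [Qp, map_add, map_mul, map_pow, rename_P2, rename_P3, rename_P4, rename_X,
    e0, e1, e2, e3]
  rw [key n m (X 0) (X 2) (X 1) (X 0) (X 1) (X 2) (by simp only [P2]; ring)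
        (by simp only [P3]; ring),
    key n m (X 3) (X 1) (X 2) (X 3) (X 2) (X 1) (by simp only [P2]; ring)
        (by simp only [P3]; ring),
    key n m (X 1) (X 3) (X 0) (X 1) (X 0) (X 3) (by simp only [P2]; ring)
        (by simp only [P3]; ring),
    key n m (X 2) (X 0) (X 3) (X 2) (X 3) (X 0) (by simp only [P2]; ring)
        (by simp only [P3]; ring),
    show P4 (X 0) (X 3) (X 2) (X 1) = P4 (X 0) (X 3) (X 1) (X 2) from by simp only [P4]; ring]
  ring

lemma swap23 (n m k : ℕ) :
    rename (⇑(Equiv.swap (2 : Fin 4) 3)) (Qp n m k) = -Qp n m k := by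
  have e0 : Equiv.swap (2 : Fin 4) 3 0 = 0 := by decide
  have e1 : Equiv.swap (2 : Fin 4) 3 1 = 1 := by decide
  have e2 : Equiv.swap (2 : Fin 4) 3 2 = 3 := by decide
  have e3 : Equiv.swap (2 : Fin 4) 3 3 = 2 := by decide
  simp only [Qp, map_add, map_mul, map_pow, rename_P2, rename_P3, rename_P4, rename_X,
    e0, e1, e2, e3]
  rw [key n m (X 0) (X 1) (X 3) (X 1) (X 0) (X 3) (by simp only [P2]; ring)
        (by simp only [P3]; ring),
    key n m (X 2) (X 3) (X 1) (X 3) (X 2) (X 1) (by simp only [P2]; ring)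
        (by simp only [P3]; ring),
    key n m (X 3) (X 2) (X 0) (X 2) (X 3) (X 0) (by simp only [P2]; ring)
        (by simp only [P3]; ring),
    key n m (X 1) (X 0) (X 2) (X 0) (X 1) (X 2) (by simp only [P2]; ring)
        (by simp only [P3]; ring),
    show P4 (X 0) (X 1) (X 3) (X 2) = P4 (X 0) (X 1) (X 2) (X 3) from by simp only [P4]; ring]
  ring

/-- Q^{n,m,k} is skew symmetric: every permutation of the variables multiplies it
by the sign of the permutation. -/
theorem stmt_18 (n m k : ℕ) (τ : Equiv.Perm (Fin 4)) :
    rename (⇑τ) (Qp n m k) = ((Equiv.Perm.sign τ : ℤ) : ℚ) • Qp n m k := by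
  let H : Submonoid (Equiv.Perm (Fin 4)) :=
    { carrier := {σ | rename (⇑σ) (Qp n m k) = ((Equiv.Perm.sign σ : ℤ) : ℚ) • Qp n m k}
      one_mem' := by
        simp [Equiv.Perm.coe_one, rename_id]
      mul_mem' := by
        intro a b ha hb
        simp only [Set.mem_setOf_eq] at ha hb ⊢
        rw [Equiv.Perm.coe_mul, ← rename_rename, hb, map_smul, ha, smul_smul, map_mul]
        congr 1
        push_cast
        ring }
  have hsw : ∀ i : Fin 3, Equiv.swap i.castSucc i.succ ∈ H := by
    intro i
    have hsign : ∀ x y : Fin 4, x ≠ y →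
        (((Equiv.Perm.sign (Equiv.swap x y) : ℤ) : ℚ)) = -1 := by
      intro x y hxy
      rw [Equiv.Perm.sign_swap hxy]
      norm_num
    fin_cases i
    · show rename (⇑(Equiv.swap (0 : Fin 4) 1)) (Qp n m k) =
        ((Equiv.Perm.sign (Equiv.swap (0 : Fin 4) 1) : ℤ) : ℚ) • Qp n m k
      rw [swap01, hsign 0 1 (by decide)]; simp
    · show rename (⇑(Equiv.swap (1 : Fin 4) 2)) (Qp n m k) =
        ((Equiv.Perm.sign (Equiv.swap (1 : Fin 4) 2) : ℤ) : ℚ) • Qp n m k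
      rw [swap12, hsign 1 2 (by decide)]; simp
    · show rename (⇑(Equiv.swap (2 : Fin 4) 3)) (Qp n m k) =
        ((Equiv.Perm.sign (Equiv.swap (2 : Fin 4) 3) : ℤ) : ℚ) • Qp n m k
      rw [swap23, hsign 2 3 (by decide)]; simp
  have hτ : τ ∈ H := by
    have htop := Equiv.Perm.mclosure_swap_castSucc_succ 3
    have : τ ∈ Submonoid.closure (Set.range fun i : Fin 3 =>
        Equiv.swap i.castSucc i.succ) := by rw [htop]; trivial
    exact Submonoid.closure_le.mpr (by rintro _ ⟨i, rfl⟩; exact hsw i) this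
  exact hτ
end
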